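/- Let (C, Δ, Q) be a Rota-Baxter coalgebra of weight 0. Define Δ̃(c) = Q(c₁)⊗c₂ − Q(c₂)⊗c₁. Then (C, Δ̃) is a pre-Lie coalgebra: (Δ̃⊗id)Δ̃ − (id⊗Δ̃)Δ̃ is invariant under swapping the first two tensor factors. -/

import Mathlib

open TensorProduct LinearMap

/-- Rota--Baxter coalgebra of weight `γ`:
`Q(c₁)⊗Q(c₂) = Q(c)₁⊗Q(Q(c)₂) + Q(Q(c)₁)⊗Q(c)₂ + γ Q(c)₁⊗Q(c)₂`. -/
def IsRotaBaxterCoalgebra (K : Type*) [Field K] {C : Type*} [AddCommGroup C] [Module K C]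
    (D : C →ₗ[K] C ⊗[K] C) (Q : C →ₗ[K] C) (γ : K) : Prop :=
  TensorProduct.map Q Q ∘ₗ D =
    lTensor C Q ∘ₗ D ∘ₗ Q + rTensor C Q ∘ₗ D ∘ₗ Q + γ • (D ∘ₗ Q)

/-- The associator `(Δ⊗id)Δ − (id⊗Δ)Δ` of a comultiplication (with the usual
reassociation). -/
noncomputable def coassociator (K : Type*) [Field K] {C : Type*} [AddCommGroup C] [Module K C]
    (D : C →ₗ[K] C ⊗[K] C) : C →ₗ[K] (C ⊗[K] C) ⊗[K] C :=
  rTensor C D ∘ₗ D - (TensorProduct.assoc K C C C).symm.toLinearMap ∘ₗ lTensor C D ∘ₗ D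

/-- `(C, D)` is a pre-Lie coalgebra: the associator is invariant under swapping the first
two tensor factors. -/
def IsPreLieCoalgebra (K : Type*) [Field K] {C : Type*} [AddCommGroup C] [Module K C]
    (D : C →ₗ[K] C ⊗[K] C) : Prop :=
  coassociator K D =
    rTensor C (TensorProduct.comm K C C).toLinearMap ∘ₗ coassociator K D

/-!
Write `N = (1 - τ) Δ`, so that `Δ̃ = (Q ⊗ 1) N`; the pre-Lie identity says
`(1 - τ₁₂) (Δ̃ ⊗ 1) Δ̃ = (1 - τ₁₂) α⁻¹ (1 ⊗ Δ̃) Δ̃`. Since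
`(1 - τ) (Q ⊗ 1) (1 - τ) = (1 - τ) (Q ⊗ 1 + 1 ⊗ Q)`, the weight-zero Rota–Baxter identity turns
`(1 - τ) Δ̃ Q` into `(1 - τ) (Q ⊗ Q) Δ`. By coassociativity both sides then factor through the
iterated coproduct `c ↦ c₁ ⊗ c₂ ⊗ c₃`, and both equal
`Q c₁ ⊗ Q c₂ ⊗ c₃ - Q c₂ ⊗ Q c₁ ⊗ c₃ - Q c₂ ⊗ Q c₃ ⊗ c₁ + Q c₃ ⊗ Q c₂ ⊗ c₁`.
-/

section

variable {K : Type*} {C : Type*} [AddCommGroup C]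

local notation "τ" => LinearEquiv.toLinearMap (TensorProduct.comm K C C)
local notation "α" => LinearEquiv.toLinearMap (TensorProduct.assoc K C C C)
local notation "α⁻¹" => LinearEquiv.toLinearMap (LinearEquiv.symm (TensorProduct.assoc K C C C))

section CommRing

variable [CommRing K] [Module K C]

theorem antisymm_comp_rTensor_comp_antisymm (Q : C →ₗ[K] C) :
    (LinearMap.id - τ) ∘ₗ rTensor C Q ∘ₗ (LinearMap.id - τ) =
      (LinearMap.id - τ) ∘ₗ (lTensor C Q + rTensor C Q) := by
  apply TensorProduct.ext'
  intro x y
  simp only [coe_comp, Function.comp_apply, LinearMap.sub_apply, LinearMap.add_apply, id_coe,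
    id_eq, LinearEquiv.coe_coe, comm_tmul, map_sub, map_add, rTensor_tmul, lTensor_tmul]
  abel

theorem rTensor_comp_antisymm_comp_of_coassoc {D : C →ₗ[K] C ⊗[K] C}
    (hcoassoc : rTensor C D ∘ₗ D = α⁻¹ ∘ₗ lTensor C D ∘ₗ D) :
    rTensor C D ∘ₗ (LinearMap.id - τ) ∘ₗ D =
      (LinearMap.id - LinearEquiv.toLinearMap (TensorProduct.comm K C (C ⊗[K] C)) ∘ₗ α) ∘ₗ
        rTensor C D ∘ₗ D := by
  have hα := (LinearEquiv.eq_toLinearMap_symm_comp _ _).1 hcoassoc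
  rw [sub_comp, comp_sub, LinearMap.id_comp, ← comp_assoc D, rTensor_comp_comm, comp_assoc,
    sub_comp, LinearMap.id_comp, comp_assoc, hα]

theorem lTensor_comp_antisymm_comp_of_coassoc {D : C →ₗ[K] C ⊗[K] C}
    (hcoassoc : rTensor C D ∘ₗ D = α⁻¹ ∘ₗ lTensor C D ∘ₗ D) :
    lTensor C D ∘ₗ (LinearMap.id - τ) ∘ₗ D =
      (α - LinearEquiv.toLinearMap (TensorProduct.comm K (C ⊗[K] C) C)) ∘ₗ
        rTensor C D ∘ₗ D := by
  have hα := (LinearEquiv.eq_toLinearMap_symm_comp _ _).1 hcoassoc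
  rw [sub_comp, LinearMap.id_comp, comp_sub, ← comp_assoc D, lTensor_comp_comm, comp_assoc,
    sub_comp, hα]

theorem rTensor_antisymm_comp_map_comp_sub_cycle (Q : C →ₗ[K] C) :
    rTensor C ((LinearMap.id - τ) ∘ₗ map Q Q) ∘ₗ
        (LinearMap.id - LinearEquiv.toLinearMap (TensorProduct.comm K C (C ⊗[K] C)) ∘ₗ α) =
      (LinearMap.id - rTensor C τ) ∘ₗ α⁻¹ ∘ₗ map Q (rTensor C Q ∘ₗ (LinearMap.id - τ)) ∘ₗ
        (α - LinearEquiv.toLinearMap (TensorProduct.comm K (C ⊗[K] C) C)) := by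
  apply TensorProduct.ext_threefold
  intro x y z
  simp only [coe_comp, Function.comp_apply, LinearMap.sub_apply, id_coe, id_eq,
    LinearEquiv.coe_coe, assoc_tmul, assoc_symm_tmul, comm_tmul, map_sub, rTensor_tmul, map_tmul,
    sub_tmul, tmul_sub]
  abel

end CommRing

variable [Field K] [Module K C]

theorem antisymm_comp_comp_eq_of_isRotaBaxterCoalgebra_zero {D : C →ₗ[K] C ⊗[K] C}
    {Q : C →ₗ[K] C} (hQ : IsRotaBaxterCoalgebra K D Q 0) :
    (LinearMap.id - τ) ∘ₗ (rTensor C Q ∘ₗ (LinearMap.id - τ) ∘ₗ D) ∘ₗ Q =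
      (LinearMap.id - τ) ∘ₗ map Q Q ∘ₗ D := by
  rw [IsRotaBaxterCoalgebra, zero_smul, add_zero] at hQ
  calc (LinearMap.id - τ) ∘ₗ (rTensor C Q ∘ₗ (LinearMap.id - τ) ∘ₗ D) ∘ₗ Q
      = ((LinearMap.id - τ) ∘ₗ rTensor C Q ∘ₗ (LinearMap.id - τ)) ∘ₗ D ∘ₗ Q := by
        simp only [comp_assoc]
    _ = (LinearMap.id - τ) ∘ₗ (lTensor C Q ∘ₗ D ∘ₗ Q + rTensor C Q ∘ₗ D ∘ₗ Q) := by
        rw [antisymm_comp_rTensor_comp_antisymm, comp_assoc, add_comp]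
    _ = (LinearMap.id - τ) ∘ₗ map Q Q ∘ₗ D := by rw [hQ]

theorem isPreLieCoalgebra_iff {D : C →ₗ[K] C ⊗[K] C} :
    IsPreLieCoalgebra K D ↔
      (LinearMap.id - rTensor C τ) ∘ₗ rTensor C D ∘ₗ D =
        (LinearMap.id - rTensor C τ) ∘ₗ α⁻¹ ∘ₗ lTensor C D ∘ₗ D := by
  rw [← sub_eq_zero, ← comp_sub, sub_comp, LinearMap.id_comp]
  exact (sub_eq_zero (G := C →ₗ[K] (C ⊗[K] C) ⊗[K] C)).symm

theorem isPreLieCoalgebra_rTensor_comp_antisymm_comp {D : C →ₗ[K] C ⊗[K] C}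
    (hcoassoc : rTensor C D ∘ₗ D = α⁻¹ ∘ₗ lTensor C D ∘ₗ D)
    {Q : C →ₗ[K] C} (hQ : IsRotaBaxterCoalgebra K D Q 0) :
    IsPreLieCoalgebra K (rTensor C Q ∘ₗ (LinearMap.id - τ) ∘ₗ D) := by
  rw [isPreLieCoalgebra_iff]
  calc (LinearMap.id - rTensor C τ) ∘ₗ rTensor C (rTensor C Q ∘ₗ (LinearMap.id - τ) ∘ₗ D) ∘ₗ
        rTensor C Q ∘ₗ (LinearMap.id - τ) ∘ₗ D
      = rTensor C ((LinearMap.id - τ) ∘ₗ (rTensor C Q ∘ₗ (LinearMap.id - τ) ∘ₗ D) ∘ₗ Q) ∘ₗ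
          (LinearMap.id - τ) ∘ₗ D := by
        simp only [rTensor_comp, rTensor_sub, rTensor_id, comp_assoc]
    _ = rTensor C ((LinearMap.id - τ) ∘ₗ map Q Q) ∘ₗ rTensor C D ∘ₗ (LinearMap.id - τ) ∘ₗ D := by
        rw [antisymm_comp_comp_eq_of_isRotaBaxterCoalgebra_zero hQ]
        simp only [rTensor_comp, comp_assoc]
    _ = rTensor C ((LinearMap.id - τ) ∘ₗ map Q Q) ∘ₗ
          (LinearMap.id - LinearEquiv.toLinearMap (TensorProduct.comm K C (C ⊗[K] C)) ∘ₗ α) ∘ₗ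
          rTensor C D ∘ₗ D := by
        rw [rTensor_comp_antisymm_comp_of_coassoc hcoassoc]
    _ = (LinearMap.id - rTensor C τ) ∘ₗ α⁻¹ ∘ₗ map Q (rTensor C Q ∘ₗ (LinearMap.id - τ)) ∘ₗ
          (α - LinearEquiv.toLinearMap (TensorProduct.comm K (C ⊗[K] C) C)) ∘ₗ
          rTensor C D ∘ₗ D := by
        rw [← comp_assoc, rTensor_antisymm_comp_map_comp_sub_cycle]
        simp only [comp_assoc]
    _ = (LinearMap.id - rTensor C τ) ∘ₗ α⁻¹ ∘ₗ
          lTensor C (rTensor C Q ∘ₗ (LinearMap.id - τ) ∘ₗ D) ∘ₗ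
          rTensor C Q ∘ₗ (LinearMap.id - τ) ∘ₗ D := by
        rw [← lTensor_comp_antisymm_comp_of_coassoc hcoassoc]
        simp only [← comp_assoc, map_comp_lTensor, lTensor_comp_rTensor]

end

theorem rotaBaxterCoalgebra_weightZero_preLie
    (K : Type*) [Field K] (C : Type*) [AddCommGroup C] [Module K C]
    (D : C →ₗ[K] C ⊗[K] C)
    (hcoassoc : rTensor C D ∘ₗ D =
      (TensorProduct.assoc K C C C).symm.toLinearMap ∘ₗ lTensor C D ∘ₗ D)
    (Q : C →ₗ[K] C) (hQ : IsRotaBaxterCoalgebra K D Q 0)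
    -- D'(c) = Q(c₁)⊗c₂ − Q(c₂)⊗c₁
    (D' : C →ₗ[K] C ⊗[K] C)
    (hD' : D' = rTensor C Q ∘ₗ D -
      rTensor C Q ∘ₗ (TensorProduct.comm K C C).toLinearMap ∘ₗ D) :
    IsPreLieCoalgebra K D' := by
  have hD'_antisymm :
      D' = rTensor C Q ∘ₗ (LinearMap.id - (TensorProduct.comm K C C).toLinearMap) ∘ₗ D := by
    rw [hD', sub_comp, LinearMap.id_comp, comp_sub]
  rw [hD'_antisymm]
  exact isPreLieCoalgebra_rTensor_comp_antisymm_comp hcoassoc hQ
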